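/- Let d ≥ 2, let D = D(M) be a conic domain, let p ∈ (1, ∞), θ, Θ ∈ ℝ and m ∈ ℕ. Then there exists a constant N ≥ 1, depending only on d, p, m, θ, Θ and M, such that for every function f that is m times continuously differentiable on D, N^{−1} ‖f‖_{K^m_{p,θ,Θ}(D)} ≤ Σ_{k=0}^{m} ( ∫_D (ρ(x)^k ‖D^k( ρ∘^{(θ−Θ)/p} f )(x)‖)^p ρ(x)^{Θ−d} dx )^{1/p} ≤ N ‖f‖_{K^m_{p,θ,Θ}(D)}. In other words, f has finite K^m_{p,θ,Θ}(D)-norm if and only if ρ∘^{(θ−Θ)/p} f has finite weighted norm Σ_{k≤m} (∫_D (ρ^k ‖D^k(·)‖)^p ρ^{Θ−d} dx)^{1/p}, with two-sided equivalence of the norms. -/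

import Mathlib

/-!
Write `β = (θ - Θ) / p`, so that the weight `ρ∘ ^ (θ - Θ)` is `(ρ∘ ^ β) ^ p`; both inequalities
then say that multiplication by `ρ∘ ^ β`, resp. `ρ∘ ^ (-β)`, is bounded between the two weighted
spaces. The function `|x| ^ β` is homogeneous, so its `j`-th derivative is `O(|x| ^ (β - j))`.
Since the vertex lies on `∂D`, `ρ ≤ ρ∘`, hence `ρ ^ j |D^j |x| ^ β| ≲ |x| ^ β`, and the Leibniz
rule bounds `ρ ^ k |D^k (|x| ^ β u)|` pointwise by `|x| ^ β Σ_{i ≤ k} ρ ^ i |D^i u|`. Minkowski's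
inequality in `L^p` turns this pointwise bound into the norm bound.
-/

open MeasureTheory ENNReal

/-- The conic domain `D(M) = {x ∈ ℝ^d \ {0} : x/|x| ∈ M}` determined by a subset `M` of
the unit sphere `S^(d−1)`. -/
def conicDomain (d : ℕ) (M : Set (EuclideanSpace ℝ (Fin d))) :
    Set (EuclideanSpace ℝ (Fin d)) :=
  {x | x ≠ 0 ∧ ‖x‖⁻¹ • x ∈ M}

/-- `ρ(x) = dist(x, ∂D)`, the distance to the boundary of `D`. -/
noncomputable def bdist (d : ℕ) (D : Set (EuclideanSpace ℝ (Fin d)))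
    (x : EuclideanSpace ℝ (Fin d)) : ℝ :=
  Metric.infDist x (frontier D)

/-- The weighted Sobolev norm
`‖f‖_{K^m_{p,θ,Θ}(D)} = Σ_{k=0}^m (∫_D (ρ^k ‖D^k f‖)^p ρ∘^(θ−Θ) ρ^(Θ−d) dx)^(1/p)`,
valued in `[0,∞]`, where `ρ∘(x) = |x|` and `ρ(x) = dist(x, ∂D)`. -/
noncomputable def Knorm (d : ℕ) (D : Set (EuclideanSpace ℝ (Fin d))) (p θ Θ : ℝ) (m : ℕ)
    (f : EuclideanSpace ℝ (Fin d) → ℝ) : ℝ≥0∞ :=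
  ∑ k ∈ Finset.range (m + 1),
    (∫⁻ x in D,
        ENNReal.ofReal
          ((bdist d D x ^ k * ‖iteratedFDerivWithin ℝ k f D x‖) ^ p *
            (‖x‖ ^ (θ - Θ) * bdist d D x ^ (Θ - (d : ℝ))))) ^ (1 / p)

open Metric Set Finset
open scoped NNReal

section NormRpow

variable {E : Type*} [NormedAddCommGroup E] [InnerProductSpace ℝ E]

theorem contDiffOn_norm_rpow (β : ℝ) {n : WithTop ℕ∞} :
    ContDiffOn ℝ n (fun y : E => ‖y‖ ^ β) {0}ᶜ := fun _ hx =>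
  ((contDiffAt_norm ℝ hx).rpow_const_of_ne (norm_ne_zero_iff.2 hx)).contDiffWithinAt

theorem norm_rpow_eq_rpow_mul_norm_smul_rpow (β : ℝ) {c : ℝ} (hc : 0 < c) (y : E) :
    ‖y‖ ^ β = c ^ β * ‖c⁻¹ • y‖ ^ β := by
  rw [norm_smul, norm_inv, Real.norm_of_nonneg hc.le,
    Real.mul_rpow (inv_nonneg.2 hc.le) (norm_nonneg y), ← mul_assoc,
    ← Real.mul_rpow hc.le (inv_nonneg.2 hc.le), mul_inv_cancel₀ hc.ne', Real.one_rpow, one_mul]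

/-- `‖·‖ ^ β` is homogeneous of degree `β`, hence its `i`-th derivative of degree `β - i`. -/
theorem norm_iteratedFDeriv_norm_rpow_le (β : ℝ) {c : ℝ} (hc : 0 < c) {x : E} (hx : x ≠ 0)
    (i : ℕ) :
    ‖iteratedFDeriv ℝ i (fun y : E => ‖y‖ ^ β) x‖ ≤
      c ^ β * c⁻¹ ^ i * ‖iteratedFDeriv ℝ i (fun y : E => ‖y‖ ^ β) (c⁻¹ • x)‖ := by
  set h : E → ℝ := fun y => ‖y‖ ^ β
  set L : E →L[ℝ] E := c⁻¹ • ContinuousLinearMap.id ℝ E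
  have hs : IsOpen ({0}ᶜ : Set E) := isOpen_compl_singleton
  have hL : L ⁻¹' {0}ᶜ = {0}ᶜ := by
    ext y; simp [L, hc.ne']
  have hLx : L x ∈ ({0}ᶜ : Set E) := by simp [L, hc.ne', hx]
  have hcomp : iteratedFDeriv ℝ i (h ∘ L) x =
      (iteratedFDeriv ℝ i h (L x)).compContinuousLinearMap fun _ => L := by
    have := L.iteratedFDerivWithin_comp_right (contDiffOn_norm_rpow β (n := i))
      hs.uniqueDiffOn (by rw [hL]; exact hs.uniqueDiffOn) hLx le_rfl
    rwa [hL, iteratedFDerivWithin_of_isOpen i hs hx,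
      iteratedFDerivWithin_of_isOpen i hs hLx] at this
  have hh : h = c ^ β • (h ∘ L) := funext fun y => norm_rpow_eq_rpow_mul_norm_smul_rpow β hc y
  have hL_norm : ‖L‖ ≤ c⁻¹ := by
    simpa [L, Real.norm_of_nonneg (inv_nonneg.2 hc.le)] using
      norm_smul_le c⁻¹ (ContinuousLinearMap.id ℝ E) |>.trans
        (mul_le_of_le_one_right (by positivity) ContinuousLinearMap.norm_id_le)
  have hLdiff : ContDiffAt ℝ i (h ∘ L) x :=
    (contDiffOn_norm_rpow β).contDiffAt (hs.mem_nhds hLx) |>.comp x L.contDiff.contDiffAt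
  conv_lhs => rw [hh, iteratedFDeriv_const_smul_apply hLdiff, norm_smul, hcomp]
  rw [Real.norm_of_nonneg (by positivity), mul_assoc]
  gcongr
  refine (ContinuousMultilinearMap.norm_compContinuousLinearMap_le _ _).trans ?_
  rw [mul_comm, Finset.prod_const, Finset.card_univ, Fintype.card_fin]
  gcongr
  simp [L]

theorem exists_norm_iteratedFDeriv_norm_rpow_le [FiniteDimensional ℝ E] (β : ℝ) (i : ℕ) :
    ∃ K, 0 ≤ K ∧ ∀ x : E, x ≠ 0 →
      ‖iteratedFDeriv ℝ i (fun y : E => ‖y‖ ^ β) x‖ ≤ K * ‖x‖ ^ (β - i) := by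
  have hs : IsOpen ({0}ᶜ : Set E) := isOpen_compl_singleton
  have hcont : ContinuousOn (iteratedFDeriv ℝ i (fun y : E => ‖y‖ ^ β)) {0}ᶜ :=
    ((contDiffOn_norm_rpow β (n := i)).continuousOn_iteratedFDerivWithin le_rfl
      hs.uniqueDiffOn).congr fun y hy => (iteratedFDerivWithin_of_isOpen i hs hy).symm
  obtain ⟨K, hK⟩ := (isCompact_sphere (0 : E) 1).exists_bound_of_continuousOn
    (hcont.mono fun y hy => ne_zero_of_mem_unit_sphere ⟨y, hy⟩)
  refine ⟨max K 0, le_max_right _ _, fun x hx => ?_⟩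
  have hx' : 0 < ‖x‖ := norm_pos_iff.2 hx
  have hsphere : ‖x‖⁻¹ • x ∈ sphere (0 : E) 1 := by
    simp [norm_smul, inv_mul_cancel₀ hx'.ne']
  calc _ ≤ ‖x‖ ^ β * ‖x‖⁻¹ ^ i * max K 0 :=
        (norm_iteratedFDeriv_norm_rpow_le β hx' hx i).trans
          (by gcongr; exact (hK _ hsphere).trans (le_max_left _ _))
    _ = max K 0 * ‖x‖ ^ (β - i) := by
        rw [Real.rpow_sub hx', Real.rpow_natCast, inv_pow]; ring

end NormRpow

section Leibniz

variable {𝕜 E A : Type*} [NontriviallyNormedField 𝕜] [NormedAddCommGroup E] [NormedSpace 𝕜 E]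
  [NormedRing A] [NormedAlgebra 𝕜 A]

theorem pow_mul_norm_iteratedFDerivWithin_mul_le {f g : E → A} {s : Set E} {x : E} {N : WithTop ℕ∞}
    (hf : ContDiffOn 𝕜 N f s) (hg : ContDiffOn 𝕜 N g s) (hs : UniqueDiffOn 𝕜 s) (hx : x ∈ s)
    {k : ℕ} (hk : k ≤ N) {t B : ℝ} (ht : 0 ≤ t)
    (hfB : ∀ j ≤ k, t ^ j * ‖iteratedFDerivWithin 𝕜 j f s x‖ ≤ B) :
    t ^ k * ‖iteratedFDerivWithin 𝕜 k (fun y => f y * g y) s x‖ ≤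
      2 ^ k * B * ∑ i ∈ range (k + 1), t ^ i * ‖iteratedFDerivWithin 𝕜 i g s x‖ := by
  have hB : 0 ≤ B := (hfB 0 k.zero_le).trans' (by positivity)
  calc _ ≤ t ^ k * ∑ j ∈ range (k + 1), (k.choose j : ℝ) *
        ‖iteratedFDerivWithin 𝕜 j f s x‖ * ‖iteratedFDerivWithin 𝕜 (k - j) g s x‖ := by
        gcongr; exact norm_iteratedFDerivWithin_mul_le hf hg hs hx hk
    _ = ∑ j ∈ range (k + 1), (k.choose j : ℝ) * (t ^ j * ‖iteratedFDerivWithin 𝕜 j f s x‖) *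
        (t ^ (k - j) * ‖iteratedFDerivWithin 𝕜 (k - j) g s x‖) := by
        rw [mul_sum]
        refine sum_congr rfl fun j hj => ?_
        rw [← Nat.add_sub_of_le (Nat.lt_succ_iff.1 (mem_range.1 hj))]
        simp only [pow_add, Nat.add_sub_cancel_left]
        ring
    _ ≤ ∑ j ∈ range (k + 1), 2 ^ k * B *
        (t ^ (k - j) * ‖iteratedFDerivWithin 𝕜 (k - j) g s x‖) := by
        gcongr with j hj
        · exact_mod_cast k.choose_le_two_pow j
        · exact hfB j (Nat.lt_succ_iff.1 (mem_range.1 hj))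
    _ = _ := by
        rw [← mul_sum,
          ← sum_range_reflect (fun i => t ^ i * ‖iteratedFDerivWithin 𝕜 i g s x‖) (k + 1)]
        rfl

end Leibniz

section Multiplier

variable {E : Type*} [NormedAddCommGroup E] [InnerProductSpace ℝ E] [FiniteDimensional ℝ E]

theorem exists_pow_mul_norm_iteratedFDerivWithin_norm_rpow_mul_le {D : Set E} (hD : IsOpen D)
    (hD0 : (0 : E) ∉ D) (β : ℝ) (m : ℕ) :
    ∃ C : ℝ≥0, ∀ u : E → ℝ, ContDiffOn ℝ m u D → ∀ x ∈ D, ∀ t : ℝ, 0 ≤ t → t ≤ ‖x‖ →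
      ∀ k ≤ m, t ^ k * ‖iteratedFDerivWithin ℝ k (fun y => ‖y‖ ^ β * u y) D x‖ ≤
        C * ‖x‖ ^ β * ∑ i ∈ range (m + 1), t ^ i * ‖iteratedFDerivWithin ℝ i u D x‖ := by
  choose K hK0 hK using exists_norm_iteratedFDeriv_norm_rpow_le (E := E) β
  set K' := ∑ j ∈ range (m + 1), K j
  have hK' : 0 ≤ K' := sum_nonneg fun j _ => hK0 j
  refine ⟨(2 ^ m * K').toNNReal, fun u hu x hx t ht htx k hk => ?_⟩
  have hx0 : x ≠ 0 := ne_of_mem_of_not_mem hx hD0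
  have hx' : 0 < ‖x‖ := norm_pos_iff.2 hx0
  have hmult : ∀ j ≤ k, t ^ j * ‖iteratedFDerivWithin ℝ j (fun y : E => ‖y‖ ^ β) D x‖ ≤
      K' * ‖x‖ ^ β := by
    intro j hj
    rw [iteratedFDerivWithin_of_isOpen j hD hx]
    calc _ ≤ ‖x‖ ^ j * (K j * ‖x‖ ^ (β - j)) := by gcongr; exact hK j x hx0
      _ = K j * ‖x‖ ^ β := by
          rw [Real.rpow_sub hx', Real.rpow_natCast]; field_simp
      _ ≤ K' * ‖x‖ ^ β := by
          gcongr; exact single_le_sum (fun j _ => hK0 j) (mem_range.2 (by omega))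
  have hsubset : D ⊆ {0}ᶜ := fun y hy => ne_of_mem_of_not_mem hy hD0
  calc _ ≤ 2 ^ k * (K' * ‖x‖ ^ β) *
        ∑ i ∈ range (k + 1), t ^ i * ‖iteratedFDerivWithin ℝ i u D x‖ :=
        pow_mul_norm_iteratedFDerivWithin_mul_le ((contDiffOn_norm_rpow β).mono hsubset) hu
          hD.uniqueDiffOn hx (by exact_mod_cast hk) ht hmult
    _ ≤ 2 ^ m * (K' * ‖x‖ ^ β) *
        ∑ i ∈ range (m + 1), t ^ i * ‖iteratedFDerivWithin ℝ i u D x‖ := by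
        gcongr
        exact one_le_two
    _ = _ := by rw [Real.coe_toNNReal _ (by positivity)]; ring

end Multiplier

section WeightedSobolevNorm

variable {E : Type*} [NormedAddCommGroup E] [InnerProductSpace ℝ E] [MeasurableSpace E]

/-- `Σ_{k ≤ m} ‖ρ^k |D^k f| v‖_{L^p(D, μ)}`: the weight `v` multiplies the integrand before the
`p`-th power is taken, so `v ^ p` plays the role of the density `ρ∘^(θ-Θ) ρ^(Θ-d)` of `Knorm`. -/
noncomputable def weightedSobolevNorm (μ : Measure E) (D : Set E) (ρ v : E → ℝ) (p : ℝ) (m : ℕ)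
    (f : E → ℝ) : ℝ≥0∞ :=
  ∑ k ∈ range (m + 1),
    eLpNorm' (fun x => ρ x ^ k * ‖iteratedFDerivWithin ℝ k f D x‖ * v x) p (μ.restrict D)

variable {μ : Measure E} {D : Set E} {ρ v : E → ℝ} {p : ℝ} {m : ℕ}

theorem weightedSobolevNorm_congr {v' f f' : E → ℝ} (hD : MeasurableSet D) (hv : EqOn v v' D)
    (hf : EqOn f f' D) :
    weightedSobolevNorm μ D ρ v p m f = weightedSobolevNorm μ D ρ v' p m f' :=
  sum_congr rfl fun k _ => eLpNorm'_congr_ae <| (ae_restrict_mem hD).mono fun x hx => by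
    simp only [hv hx, iteratedFDerivWithin_congr hf hx]

variable [FiniteDimensional ℝ E] [BorelSpace E]

theorem exists_weightedSobolevNorm_norm_rpow_mul_le (hD : IsOpen D) (hD0 : (0 : E) ∉ D)
    (hρ : Measurable ρ) (hρD : ∀ x ∈ D, 0 ≤ ρ x ∧ ρ x ≤ ‖x‖) (hv : Measurable v)
    (hv0 : ∀ x ∈ D, 0 ≤ v x) (β : ℝ) (hp : 1 ≤ p) (m : ℕ) :
    ∃ N : ℝ≥0, ∀ u : E → ℝ, ContDiffOn ℝ m u D →
      weightedSobolevNorm μ D ρ v p m (fun x => ‖x‖ ^ β * u x) ≤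
        N * weightedSobolevNorm μ D ρ (fun x => ‖x‖ ^ β * v x) p m u := by
  obtain ⟨C, hC⟩ := exists_pow_mul_norm_iteratedFDerivWithin_norm_rpow_mul_le hD hD0 β m
  refine ⟨(m + 1) * C, fun u hu => ?_⟩
  set G : ℕ → E → ℝ := fun i x => ρ x ^ i * ‖iteratedFDerivWithin ℝ i u D x‖ * (‖x‖ ^ β * v x)
  have hG : ∀ i ∈ range (m + 1), AEStronglyMeasurable (G i) (μ.restrict D) := fun i hi =>
    (((hρ.pow_const i).aestronglyMeasurable).mul
      ((hu.continuousOn_iteratedFDerivWithin (by exact_mod_cast mem_range_succ_iff.1 hi)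
        hD.uniqueDiffOn).norm.aestronglyMeasurable hD.measurableSet)).mul
      ((measurable_norm.pow_const β).mul hv).aestronglyMeasurable
  have hpoint : ∀ k ∈ range (m + 1),
      eLpNorm' (fun x => ρ x ^ k *
          ‖iteratedFDerivWithin ℝ k (fun y => ‖y‖ ^ β * u y) D x‖ * v x) p (μ.restrict D) ≤
        C • eLpNorm' (∑ i ∈ range (m + 1), G i) p (μ.restrict D) := by
    intro k hk
    refine eLpNorm'_le_nnreal_smul_eLpNorm'_of_ae_le_mul ?_ (by linarith)
    filter_upwards [ae_restrict_mem hD.measurableSet] with x hx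
    obtain ⟨hρ0, hρx⟩ := hρD x hx
    have hG0 : 0 ≤ ∑ i ∈ range (m + 1), G i x := sum_nonneg fun i _ =>
      mul_nonneg (by positivity) (mul_nonneg (by positivity) (hv0 x hx))
    rw [← NNReal.coe_le_coe, NNReal.coe_mul, coe_nnnorm, coe_nnnorm, Finset.sum_apply,
      Real.norm_of_nonneg hG0, Real.norm_of_nonneg (mul_nonneg (by positivity) (hv0 x hx))]
    calc _ ≤ C * ‖x‖ ^ β * (∑ i ∈ range (m + 1), ρ x ^ i * ‖iteratedFDerivWithin ℝ i u D x‖) *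
          v x :=
          mul_le_mul_of_nonneg_right (hC u hu x hx (ρ x) hρ0 hρx k (mem_range_succ_iff.1 hk))
            (hv0 x hx)
      _ = C * ∑ i ∈ range (m + 1), G i x := by
          simp only [G, mul_sum, sum_mul]
          exact sum_congr rfl fun i _ => by ring
  calc _ ≤ ∑ k ∈ range (m + 1), C • eLpNorm' (∑ i ∈ range (m + 1), G i) p (μ.restrict D) :=
        sum_le_sum hpoint
    _ ≤ ∑ k ∈ range (m + 1), C • ∑ i ∈ range (m + 1), eLpNorm' (G i) p (μ.restrict D) := by
        gcongr; exact eLpNorm'_sum_le hG hp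
    _ = _ := by
        rw [sum_const, card_range, nsmul_eq_mul, ENNReal.smul_def, smul_eq_mul,
          weightedSobolevNorm]
        push_cast; ring

theorem exists_weightedSobolevNorm_norm_rpow_mul_equiv (hD : IsOpen D) (hD0 : (0 : E) ∉ D)
    (hρ : Measurable ρ) (hρD : ∀ x ∈ D, 0 ≤ ρ x ∧ ρ x ≤ ‖x‖) (hv : Measurable v)
    (hv0 : ∀ x ∈ D, 0 ≤ v x) (β : ℝ) (hp : 1 ≤ p) (m : ℕ) :
    ∃ N : ℝ≥0, 1 ≤ N ∧ ∀ u : E → ℝ, ContDiffOn ℝ m u D →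
      weightedSobolevNorm μ D ρ (fun x => ‖x‖ ^ β * v x) p m u ≤
          N * weightedSobolevNorm μ D ρ v p m (fun x => ‖x‖ ^ β * u x) ∧
        weightedSobolevNorm μ D ρ v p m (fun x => ‖x‖ ^ β * u x) ≤
          N * weightedSobolevNorm μ D ρ (fun x => ‖x‖ ^ β * v x) p m u := by
  obtain ⟨N₁, h₁⟩ := exists_weightedSobolevNorm_norm_rpow_mul_le (μ := μ) hD hD0 hρ hρD hv hv0
    β hp m
  obtain ⟨N₂, h₂⟩ := exists_weightedSobolevNorm_norm_rpow_mul_le (μ := μ)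
    (v := fun x => ‖x‖ ^ β * v x) hD hD0 hρ hρD ((measurable_norm.pow_const β).mul hv)
    (fun x hx => mul_nonneg (by positivity) (hv0 x hx)) (-β) hp m
  have hcancel : ∀ x ∈ D, ∀ a : ℝ, ‖x‖ ^ (-β) * (‖x‖ ^ β * a) = a := fun x hx a => by
    rw [← mul_assoc, ← Real.rpow_add (norm_pos_iff.2 (ne_of_mem_of_not_mem hx hD0)),
      neg_add_cancel, Real.rpow_zero, one_mul]
  refine ⟨max 1 (max N₁ N₂), le_max_left _ _, fun u hu => ⟨?_, ?_⟩⟩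
  · have hβu : ContDiffOn ℝ m (fun x => ‖x‖ ^ β * u x) D :=
      ((contDiffOn_norm_rpow β).mono fun y hy => ne_of_mem_of_not_mem hy hD0).mul hu
    calc _ = weightedSobolevNorm μ D ρ (fun x => ‖x‖ ^ β * v x) p m
          (fun x => ‖x‖ ^ (-β) * (‖x‖ ^ β * u x)) :=
          weightedSobolevNorm_congr hD.measurableSet (eqOn_refl _ _)
            fun x hx => (hcancel x hx _).symm
      _ ≤ N₂ * weightedSobolevNorm μ D ρ (fun x => ‖x‖ ^ (-β) * (‖x‖ ^ β * v x)) p m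
          (fun x => ‖x‖ ^ β * u x) := h₂ _ hβu
      _ = N₂ * weightedSobolevNorm μ D ρ v p m (fun x => ‖x‖ ^ β * u x) := by
          rw [weightedSobolevNorm_congr hD.measurableSet (fun x hx => hcancel x hx _)
            (eqOn_refl _ _)]
      _ ≤ _ := by gcongr; exact_mod_cast le_max_of_le_right (le_max_right _ _)
  · exact (h₁ u hu).trans (by gcongr; exact_mod_cast le_max_of_le_right (le_max_left _ _))

end WeightedSobolevNorm

section ConicDomain

variable {d : ℕ} {M : Set (EuclideanSpace ℝ (Fin d))}

theorem mem_conicDomain_of_norm_eq_one {y : EuclideanSpace ℝ (Fin d)} (hy : y ∈ M)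
    (hy1 : ‖y‖ = 1) : y ∈ conicDomain d M :=
  ⟨norm_ne_zero_iff.1 (hy1 ▸ one_ne_zero), by rwa [hy1, inv_one, one_smul]⟩

theorem smul_mem_conicDomain {x : EuclideanSpace ℝ (Fin d)} (hx : x ∈ conicDomain d M) {t : ℝ}
    (ht : 0 < t) : t • x ∈ conicDomain d M := by
  refine ⟨smul_ne_zero ht.ne' hx.1, ?_⟩
  rw [norm_smul, Real.norm_of_nonneg ht.le, smul_smul, mul_inv, mul_right_comm,
    inv_mul_cancel₀ ht.ne', one_mul]
  exact hx.2

open Filter Topology in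
theorem zero_mem_frontier_conicDomain (hM : (conicDomain d M).Nonempty) :
    0 ∈ frontier (conicDomain d M) := by
  obtain ⟨x, hx⟩ := hM
  have hlim : Tendsto (fun t : ℝ => t • x) (𝓝[>] 0) (𝓝 0) := tendsto_nhdsWithin_of_tendsto_nhds <|
    (continuous_id.smul continuous_const).tendsto' 0 0 (zero_smul ℝ x)
  refine ⟨mem_closure_of_tendsto hlim ?_, fun h0 => (interior_subset h0).1 rfl⟩
  exact eventually_nhdsWithin_of_forall fun t ht => smul_mem_conicDomain hx ht

theorem isOpen_conicDomain {U : Set (EuclideanSpace ℝ (Fin d))} (hU : IsOpen U) :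
    IsOpen (conicDomain d (U ∩ sphere 0 1)) := by
  have hproj : ContinuousOn (fun x : EuclideanSpace ℝ (Fin d) => ‖x‖⁻¹ • x) {0}ᶜ :=
    (continuous_norm.continuousOn.inv₀ fun x hx => norm_ne_zero_iff.2 hx).smul continuousOn_id
  convert hproj.isOpen_inter_preimage isOpen_compl_singleton hU using 1
  ext x
  refine ⟨fun hx => ⟨hx.1, hx.2.1⟩, fun hx => ⟨hx.1, hx.2, ?_⟩⟩
  simp [norm_smul, inv_mul_cancel₀ (norm_ne_zero_iff.2 (show x ≠ 0 from hx.1))]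

theorem bdist_le_norm {D : Set (EuclideanSpace ℝ (Fin d))} (h0 : 0 ∈ frontier D)
    (x : EuclideanSpace ℝ (Fin d)) : bdist d D x ≤ ‖x‖ := by
  simpa [bdist] using infDist_le_dist_of_mem (x := x) h0

end ConicDomain

theorem Knorm_eq_weightedSobolevNorm {d : ℕ} (D : Set (EuclideanSpace ℝ (Fin d))) {p : ℝ}
    (hp : 0 < p) (θ Θ : ℝ) (m : ℕ) (f : EuclideanSpace ℝ (Fin d) → ℝ) :
    Knorm d D p θ Θ m f = weightedSobolevNorm volume D (bdist d D)
      (fun x => ‖x‖ ^ ((θ - Θ) / p) * bdist d D x ^ ((Θ - d) / p)) p m f := by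
  have key : ∀ a b c : ℝ, 0 ≤ a → 0 ≤ b → 0 ≤ c →
      ENNReal.ofReal (a ^ p * (b ^ (θ - Θ) * c ^ (Θ - d))) =
        ‖a * (b ^ ((θ - Θ) / p) * c ^ ((Θ - d) / p))‖ₑ ^ p := fun a b c ha hb hc => by
    rw [Real.enorm_eq_ofReal (by positivity), ENNReal.ofReal_rpow_of_nonneg (by positivity) hp.le,
      Real.mul_rpow ha (by positivity), Real.mul_rpow (by positivity) (by positivity),
      ← Real.rpow_mul hb, ← Real.rpow_mul hc, div_mul_cancel₀ _ hp.ne', div_mul_cancel₀ _ hp.ne']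
  refine sum_congr rfl fun k _ => congrArg (· ^ (1 / p)) (lintegral_congr fun x => ?_)
  exact key _ _ _ (mul_nonneg (pow_nonneg infDist_nonneg k) (norm_nonneg _)) (norm_nonneg x)
    infDist_nonneg

theorem stmt_5_general (d : ℕ) (M : Set (EuclideanSpace ℝ (Fin d)))
    (hMne : M.Nonempty)
    (hMopen : ∃ U : Set (EuclideanSpace ℝ (Fin d)),
      IsOpen U ∧ M = U ∩ Metric.sphere (0 : EuclideanSpace ℝ (Fin d)) 1)
    (p θ Θ : ℝ) (hp : 1 < p) (m : ℕ) :
    ∃ N : ℝ, 1 ≤ N ∧ ∀ f : EuclideanSpace ℝ (Fin d) → ℝ,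
      ContDiffOn ℝ (m : ℕ∞) f (conicDomain d M) →
      (ENNReal.ofReal N)⁻¹ * Knorm d (conicDomain d M) p θ Θ m f ≤
          Knorm d (conicDomain d M) p Θ Θ m (fun x => ‖x‖ ^ ((θ - Θ) / p) * f x) ∧
        Knorm d (conicDomain d M) p Θ Θ m (fun x => ‖x‖ ^ ((θ - Θ) / p) * f x) ≤
          ENNReal.ofReal N * Knorm d (conicDomain d M) p θ Θ m f := by
  obtain ⟨U, hU, rfl⟩ := hMopen
  set D := conicDomain d (U ∩ sphere 0 1)
  have h0 : 0 ∈ frontier D := zero_mem_frontier_conicDomain <|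
    hMne.imp fun y hy => mem_conicDomain_of_norm_eq_one hy (by simpa using hy.2)
  have hρ : Measurable (bdist d D) := (continuous_infDist_pt _).measurable
  obtain ⟨N, hN1, hN⟩ := exists_weightedSobolevNorm_norm_rpow_mul_equiv (μ := volume)
    (v := fun x => bdist d D x ^ ((Θ - d) / p)) (isOpen_conicDomain hU) (fun h => h.1 rfl) hρ
    (fun x _ => ⟨infDist_nonneg, bdist_le_norm h0 x⟩) (hρ.pow_const _)
    (fun x _ => Real.rpow_nonneg infDist_nonneg _) ((θ - Θ) / p) hp.le m
  have hN0 : (N : ℝ≥0∞) ≠ 0 := by simpa using (zero_lt_one.trans_le hN1).ne'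
  refine ⟨N, hN1, fun f hf => ?_⟩
  rw [ENNReal.ofReal_coe_nnreal, ENNReal.inv_mul_le_iff hN0 ENNReal.coe_ne_top]
  simpa only [Knorm_eq_weightedSobolevNorm D (zero_lt_one.trans hp), sub_self, zero_div,
    Real.rpow_zero, one_mul] using hN f hf

/-- On a conic domain `D = D(M) ⊆ ℝ^d`, `d ≥ 2`, for `p ∈ (1,∞)`,
`θ, Θ ∈ ℝ`, `m ∈ ℕ`, there is `N ≥ 1` (depending only on `d, p, m, θ, Θ, M`) such that
for every `f ∈ C^m(D)`,
`N⁻¹ ‖f‖_{K^m_{p,θ,Θ}(D)} ≤ ‖ρ∘^((θ−Θ)/p) f‖_{K^m_{p,Θ,Θ}(D)} ≤ N ‖f‖_{K^m_{p,θ,Θ}(D)}`;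
i.e. the norm of `f` in `K^m_{p,θ,Θ}(D)` is equivalent to the purely
boundary-weighted norm of `ρ∘^((θ−Θ)/p) f`. -/
theorem stmt_5 (d : ℕ) (hd : 2 ≤ d) (M : Set (EuclideanSpace ℝ (Fin d)))
    (hMne : M.Nonempty)
    (hMs : M ⊆ Metric.sphere (0 : EuclideanSpace ℝ (Fin d)) 1)
    (hMopen : ∃ U : Set (EuclideanSpace ℝ (Fin d)),
      IsOpen U ∧ M = U ∩ Metric.sphere (0 : EuclideanSpace ℝ (Fin d)) 1)
    (hMproper : ¬ Metric.sphere (0 : EuclideanSpace ℝ (Fin d)) 1 ⊆ closure M)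
    (p θ Θ : ℝ) (hp : 1 < p) (m : ℕ) :
    ∃ N : ℝ, 1 ≤ N ∧ ∀ f : EuclideanSpace ℝ (Fin d) → ℝ,
      ContDiffOn ℝ (m : ℕ∞) f (conicDomain d M) →
      (ENNReal.ofReal N)⁻¹ * Knorm d (conicDomain d M) p θ Θ m f ≤
          Knorm d (conicDomain d M) p Θ Θ m (fun x => ‖x‖ ^ ((θ - Θ) / p) * f x) ∧
        Knorm d (conicDomain d M) p Θ Θ m (fun x => ‖x‖ ^ ((θ - Θ) / p) * f x) ≤
          ENNReal.ofReal N * Knorm d (conicDomain d M) p θ Θ m f :=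
  stmt_5_general d M hMne hMopen p θ Θ hp m
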